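/- arXiv:2412.16660 — 2 statements merged into one kernel-verified Lean document; each statement's English description precedes it below -/
import Mathlib

section
/- Let $\mathfrak{B} \in W^{1,\infty}(\mathbb{R}^d)^d$ be a time-independent vector field with flow $\Phi(t,t_0,x_0)$, let $\Omega \subset \mathbb{R}^d$ be a bounded open set, and let $\mathcal{O} \subset \mathbb{R}^d$ be a nonempty open set. Assume that for every $x_0 \in \overline{\Omega}$ there exists $t < 0$ with $\Phi(t, 0, x_0) \in \mathcal{O}$. Then there exist $T_0 > 0$ and $r_0 > 0$ such that for all $T > T_0$: for every $x_0 \in \overline{\Omega}$ and every $t_0 \in [T_0, T]$ there exists $t \in (t_0 - T_0, t_0)$ such that for all $x \in \overline{B}(x_0, r_0)$ one has $\Phi(t, t_0, x) \in \mathcal{O}$. -/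
open Real Set Metric

/-! The set of initial points whose backward trajectory is in `𝒪` at a fixed time `s < 0` is
open, because by Grönwall the time-`s` flow map is Lipschitz. These sets cover the compact set
`closure Ω`; their unions over windows `(-T, 0)` of times grow with `T`, so one window
`(-T₀, 0)` already covers it, and a Lebesgue number `2 r₀` of the cover makes one time `s` work on
a whole ball `closedBall x₀ r₀`. By autonomy, the time `t₀ + s` then works from time `t₀`. -/

section Flow

variable {E : Type*} [NormedAddCommGroup E] [NormedSpace ℝ E]

theorem lipschitzWith_flow_of_nonpos {B : E → E} {K : NNReal} (hB : LipschitzWith K B)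
    {ϕ : ℝ → E → E} (h0 : ∀ x, ϕ 0 x = x)
    (hϕ : ∀ x t, HasDerivAt (fun τ => ϕ τ x) (B (ϕ t x)) t) {s : ℝ} (hs : s ≤ 0) :
    LipschitzWith (Real.toNNReal (exp (K * -s))) (ϕ s) := by
  -- run time backwards: `τ ↦ ϕ (-τ) x` solves the ODE for the Lipschitz field `-B`
  have hback : ∀ x τ, HasDerivAt (fun τ => ϕ (-τ) x) (-B (ϕ (-τ) x)) τ := fun x τ => by
    simpa [Function.comp_def] using (hϕ x (-τ)).scomp τ (hasDerivAt_neg τ)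
  have hcont : ∀ x, ContinuousOn (fun τ => ϕ (-τ) x) (Icc 0 (-s)) := fun x =>
    (continuous_iff_continuousAt.2 fun τ => (hback x τ).continuousAt).continuousOn
  refine LipschitzWith.of_dist_le_mul fun x y => ?_
  rw [Real.coe_toNNReal _ (exp_pos _).le, mul_comm]
  simpa [h0] using dist_le_of_trajectories_ODE (v := fun _ z => -B z) (fun _ => hB.neg)
    (hcont x) (fun τ _ => (hback x τ).hasDerivWithinAt)
    (hcont y) (fun τ _ => (hback y τ).hasDerivWithinAt)
    (by simp [h0]) (-s) ⟨neg_nonneg.2 hs, le_rfl⟩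

end Flow

theorem exists_window_and_radius_of_cover_by_negative_times {X : Type*} [PseudoMetricSpace X]
    {C : Set X} (hC : IsCompact C) {U : ℝ → Set X} (hU : ∀ s < 0, IsOpen (U s))
    (hcov : C ⊆ ⋃ s < 0, U s) :
    ∃ T > (0 : ℝ), ∃ r > (0 : ℝ), ∀ x ∈ C, ∃ s ∈ Ioo (-T) 0, closedBall x r ⊆ U s := by
  obtain ⟨T, hT⟩ : ∃ T : ℝ, C ⊆ ⋃ s ∈ Ioo (-T) 0, U s := by
    refine hC.elim_directed_cover _ (fun T => isOpen_biUnion fun s hs => hU s hs.2) ?_ ?_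
    · intro x hx
      obtain ⟨s, hs, hxs⟩ := mem_iUnion₂.1 (hcov hx)
      exact mem_iUnion.2 ⟨-s + 1, mem_biUnion ⟨by linarith, hs⟩ hxs⟩
    · exact Monotone.directed_le fun T T' hTT' =>
        biUnion_mono (fun s hs => ⟨by linarith [hs.1], hs.2⟩) fun _ _ => le_rfl
  obtain ⟨δ, hδ, hball⟩ := lebesgue_number_lemma_of_metric (c := fun s : Ioo (-T) 0 => U s) hC
    (fun s => hU s s.2.2) (by simpa only [iUnion_subtype] using hT)
  refine ⟨max T 1, by positivity, δ / 2, half_pos hδ, fun x hx => ?_⟩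
  obtain ⟨⟨s, hs⟩, hxs⟩ := hball x hx
  exact ⟨s, ⟨lt_of_le_of_lt (neg_le_neg (le_max_left T 1)) hs.1, hs.2⟩,
    (closedBall_subset_ball (half_lt_self hδ)).trans hxs⟩

theorem stmt_1_general {d : ℕ} (B : EuclideanSpace ℝ (Fin d) → EuclideanSpace ℝ (Fin d))
    (K : NNReal) (hBlip : LipschitzWith K B)
    (Φ : ℝ → ℝ → EuclideanSpace ℝ (Fin d) → EuclideanSpace ℝ (Fin d))
    (hinit : ∀ t0 : ℝ, ∀ x0, Φ t0 t0 x0 = x0)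
    (hODE : ∀ t0 : ℝ, ∀ x0, ∀ t : ℝ, HasDerivAt (fun τ => Φ τ t0 x0) (B (Φ t t0 x0)) t)
    (hauto : ∀ t t0 : ℝ, ∀ x, Φ t t0 x = Φ (t - t0) 0 x)
    (Ω 𝒪 : Set (EuclideanSpace ℝ (Fin d)))
    (hΩb : Bornology.IsBounded Ω)
    (h𝒪 : IsOpen 𝒪)
    (henter : ∀ x0 ∈ closure Ω, ∃ t < (0:ℝ), Φ t 0 x0 ∈ 𝒪) :
    ∃ T0 > (0:ℝ), ∃ r0 > (0:ℝ), ∀ T > T0,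
      ∀ x0 ∈ closure Ω, ∀ t0 ∈ Set.Icc T0 T,
        ∃ t ∈ Set.Ioo (t0 - T0) t0, ∀ x ∈ Metric.closedBall x0 r0, Φ t t0 x ∈ 𝒪 := by
  have hopen : ∀ s < (0 : ℝ), IsOpen (Φ s 0 ⁻¹' 𝒪) := fun s hs => h𝒪.preimage
    (lipschitzWith_flow_of_nonpos (ϕ := fun τ => Φ τ 0) hBlip (hinit 0) (hODE 0) hs.le).continuous
  have hcov : closure Ω ⊆ ⋃ s < (0 : ℝ), Φ s 0 ⁻¹' 𝒪 := fun x hx => by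
    obtain ⟨s, hs, hxs⟩ := henter x hx
    exact mem_iUnion₂.2 ⟨s, hs, hxs⟩
  obtain ⟨T0, hT0, r0, hr0, hflush⟩ :=
    exists_window_and_radius_of_cover_by_negative_times hΩb.isCompact_closure hopen hcov
  refine ⟨T0, hT0, r0, hr0, fun T _ x0 hx0 t0 _ => ?_⟩
  obtain ⟨s, hs, hball⟩ := hflush x0 hx0
  refine ⟨t0 + s, ⟨by linarith [hs.1], by linarith [hs.2]⟩, fun x hx => ?_⟩
  rw [hauto, add_sub_cancel_left]
  exact hball hx

/-- For an autonomous Lipschitz bounded vector field, if every backward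
trajectory starting from `closure Ω` enters the open set `𝒪`, then there are `T0 > 0`
and `r0 > 0` such that for every `T > T0` the flushing condition `(𝓕𝓒)` holds for `𝒪`. -/
theorem stmt_1 {d : ℕ} (B : EuclideanSpace ℝ (Fin d) → EuclideanSpace ℝ (Fin d))
    (K : NNReal) (hBlip : LipschitzWith K B) (Mb : ℝ) (hBbd : ∀ x, ‖B x‖ ≤ Mb)
    (Φ : ℝ → ℝ → EuclideanSpace ℝ (Fin d) → EuclideanSpace ℝ (Fin d))
    (hinit : ∀ t0 : ℝ, ∀ x0, Φ t0 t0 x0 = x0)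
    (hODE : ∀ t0 : ℝ, ∀ x0, ∀ t : ℝ, HasDerivAt (fun τ => Φ τ t0 x0) (B (Φ t t0 x0)) t)
    (hauto : ∀ t t0 : ℝ, ∀ x, Φ t t0 x = Φ (t - t0) 0 x)
    (Ω 𝒪 : Set (EuclideanSpace ℝ (Fin d)))
    (hΩ : IsOpen Ω) (hΩb : Bornology.IsBounded Ω)
    (h𝒪 : IsOpen 𝒪) (h𝒪ne : 𝒪.Nonempty)
    (henter : ∀ x0 ∈ closure Ω, ∃ t < (0:ℝ), Φ t 0 x0 ∈ 𝒪) :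
    ∃ T0 > (0:ℝ), ∃ r0 > (0:ℝ), ∀ T > T0,
      ∀ x0 ∈ closure Ω, ∀ t0 ∈ Set.Icc T0 T,
        ∃ t ∈ Set.Ioo (t0 - T0) t0, ∀ x ∈ Metric.closedBall x0 r0, Φ t t0 x ∈ 𝒪 :=
  stmt_1_general B K hBlip Φ hinit hODE hauto Ω 𝒪 hΩb h𝒪 henter
end

section
/- Let $\mathfrak{B} \in L^{\infty}(0,T; W^{1,\infty}(\mathbb{R}^d)^d)$ with flow $\Phi$, let $\Omega$ be a bounded open set, and let $\mathcal{O} \subset \mathbb{R}^d$ be a nonempty open set with bounded boundary. Assume $(T, T_0, r_0, \mathfrak{B}, \Omega)$ satisfies the flushing condition for $\mathcal{O}$: for every $x_0 \in \overline{\Omega}$ and $t_0 \in [T_0, T]$ there is $t \in (t_0 - T_0, t_0)$ such that $\Phi(t, t_0, x) \in \mathcal{O}$ for all $x \in \overline{B}(x_0, r_0)$. Then there exists an open set $\mathcal{O}_0$ compactly contained in $\mathcal{O}$ such that $(T, T_0, r_0/2, \mathfrak{B}, \Omega)$ satisfies the flushing condition for $\mathcal{O}_0$. -/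
open MeasureTheory Real Set Metric

/-- If `(T,T0,r0,𝔅,Ω)` satisfies the flushing condition for an open set `𝒪`
with bounded boundary, then there is an open set `𝒪₀` compactly contained in `𝒪` such that
`(T,T0,r0/2,𝔅,Ω)` satisfies the flushing condition for `𝒪₀`. The flow `Φ` is jointly
Lipschitz in `(t₀,x)` uniformly in `t` with constant `exp(L T)`. -/
theorem stmt_2 {d : ℕ} (T T0 r0 Mb L : ℝ)
    (hT0 : 0 < T0) (hT : T0 < T) (hr0 : 0 < r0) (hMb : 0 ≤ Mb) (hL : 0 ≤ L)
    (Φ : ℝ → ℝ → EuclideanSpace ℝ (Fin d) → EuclideanSpace ℝ (Fin d))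
    (hΦlip : ∀ t ∈ Set.Icc (0:ℝ) T, ∀ t0 ∈ Set.Icc (0:ℝ) T, ∀ s0 ∈ Set.Icc (0:ℝ) T,
      ∀ x0 y0 : EuclideanSpace ℝ (Fin d),
      ‖Φ t t0 x0 - Φ t s0 y0‖ ≤ Real.exp (L * T) * (Mb * |t0 - s0| + ‖x0 - y0‖))
    (Ω 𝒪 : Set (EuclideanSpace ℝ (Fin d)))
    (hΩb : Bornology.IsBounded Ω)
    (h𝒪 : IsOpen 𝒪) (h𝒪ne : 𝒪.Nonempty) (hfr𝒪 : Bornology.IsBounded (frontier 𝒪))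
    (hflush : ∀ x0 ∈ closure Ω, ∀ t0 ∈ Set.Icc T0 T,
      ∃ t ∈ Set.Ioo (t0 - T0) t0, ∀ x ∈ Metric.closedBall x0 r0, Φ t t0 x ∈ 𝒪) :
    ∃ 𝒪₀ : Set (EuclideanSpace ℝ (Fin d)), IsOpen 𝒪₀ ∧
      IsCompact (closure 𝒪₀) ∧ closure 𝒪₀ ⊆ 𝒪 ∧
      ∀ x0 ∈ closure Ω, ∀ t0 ∈ Set.Icc T0 T,
        ∃ t ∈ Set.Ioo (t0 - T0) t0, ∀ x ∈ Metric.closedBall x0 (r0 / 2), Φ t t0 x ∈ 𝒪₀ := by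
  classical
  set C := Real.exp (L * T) with hC
  have hCpos : 0 < C := Real.exp_pos _
  set S : Set (EuclideanSpace ℝ (Fin d) × ℝ) := (closure Ω) ×ˢ (Set.Icc T0 T) with hSdef
  have hS : IsCompact S := (hΩb.isCompact_closure).prod isCompact_Icc
  have key : ∀ p ∈ S, ∃ (V : Set (EuclideanSpace ℝ (Fin d) × ℝ)) (K : Set (EuclideanSpace ℝ (Fin d))) (ε : ℝ),
      IsOpen V ∧ p ∈ V ∧ 0 < ε ∧ IsCompact K ∧ Metric.cthickening ε K ⊆ 𝒪 ∧
      ∀ q ∈ V, q ∈ S → ∃ t ∈ Set.Ioo (q.2 - T0) q.2,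
        ∀ x ∈ Metric.closedBall q.1 (r0 / 2), Φ t q.2 x ∈ Metric.thickening ε K := by
    rintro ⟨x0, t0⟩ hp
    obtain ⟨hx0, ht0⟩ := hp
    obtain ⟨t, ht, himg⟩ := hflush x0 hx0 t0 ht0
    have ht0I : t0 ∈ Set.Icc (0:ℝ) T := ⟨le_of_lt (lt_of_lt_of_le hT0 ht0.1), ht0.2⟩
    have htI : t ∈ Set.Icc (0:ℝ) T :=
      ⟨by linarith [ht.1, ht0.1], by linarith [ht.2, ht0.2]⟩
    have hcont : Continuous (Φ t t0) := by
      apply LipschitzWith.continuous (K := C.toNNReal)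
      apply LipschitzWith.of_dist_le_mul
      intro x y
      have h := hΦlip t htI t0 ht0I t0 ht0I x y
      simp only [sub_self, abs_zero, mul_zero, zero_add] at h
      rw [dist_eq_norm, dist_eq_norm, Real.coe_toNNReal C hCpos.le]
      exact h
    set K : Set (EuclideanSpace ℝ (Fin d)) := Φ t t0 '' Metric.closedBall x0 r0 with hKdef
    have hKc : IsCompact K := (isCompact_closedBall x0 r0).image hcont
    have hK𝒪 : K ⊆ 𝒪 := by
      rintro _ ⟨x, hx, rfl⟩
      exact himg x hx
    obtain ⟨ε, hε, hεsub⟩ := hKc.exists_cthickening_subset_open h𝒪 hK𝒪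
    set δ : ℝ := min (min (ε / (2 * C * (Mb + 1))) (r0 / 2)) (min (t0 - t) (t - (t0 - T0)))
      with hδdef
    have hδpos : 0 < δ := by
      refine lt_min (lt_min ?_ (by linarith)) (lt_min (by linarith [ht.2]) (by linarith [ht.1]))
      positivity
    refine ⟨(Metric.ball x0 δ) ×ˢ (Metric.ball t0 δ), K, ε,
      (Metric.isOpen_ball).prod Metric.isOpen_ball,
      ⟨Metric.mem_ball_self hδpos, Metric.mem_ball_self hδpos⟩, hε, hKc, hεsub, ?_⟩
    rintro ⟨y0, s0⟩ ⟨hy0V, hs0V⟩ ⟨hy0S, hs0S⟩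
    simp only at hy0V hs0V hy0S hs0S ⊢
    have hs0I : s0 ∈ Set.Icc (0:ℝ) T := ⟨le_of_lt (lt_of_lt_of_le hT0 hs0S.1), hs0S.2⟩
    have hds : |s0 - t0| < δ := by
      have := hs0V
      rwa [Metric.mem_ball, Real.dist_eq] at this
    have hδ1 : δ ≤ ε / (2 * C * (Mb + 1)) := le_trans (min_le_left _ _) (min_le_left _ _)
    have hδ2 : δ ≤ r0 / 2 := le_trans (min_le_left _ _) (min_le_right _ _)
    have hδ3 : δ ≤ t0 - t := le_trans (min_le_right _ _) (min_le_left _ _)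
    have hδ4 : δ ≤ t - (t0 - T0) := le_trans (min_le_right _ _) (min_le_right _ _)
    have habs := abs_lt.mp hds
    refine ⟨t, ⟨by linarith [habs.2], by linarith [habs.1]⟩, ?_⟩
    intro x hx
    have hxball : x ∈ Metric.closedBall x0 r0 := by
      rw [Metric.mem_closedBall] at hx ⊢
      have hdy : dist y0 x0 < δ := hy0V
      calc dist x x0 ≤ dist x y0 + dist y0 x0 := dist_triangle _ _ _
        _ ≤ r0 / 2 + δ := add_le_add hx hdy.le
        _ ≤ r0 := by linarith
    have hmem : Φ t t0 x ∈ K := Set.mem_image_of_mem _ hxball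
    have hdist : dist (Φ t s0 x) (Φ t t0 x) < ε := by
      rw [dist_eq_norm]
      have h := hΦlip t htI s0 hs0I t0 ht0I x x
      simp only [sub_self, norm_zero, add_zero] at h
      have h1 : C * (Mb * |s0 - t0|) ≤ C * ((Mb + 1) * δ) := by
        apply mul_le_mul_of_nonneg_left _ hCpos.le
        have : Mb * |s0 - t0| ≤ Mb * δ :=
          mul_le_mul_of_nonneg_left hds.le hMb
        nlinarith [hδpos]
      have h2 : C * ((Mb + 1) * δ) ≤ ε / 2 := by
        have := mul_le_mul_of_nonneg_left hδ1 (by positivity : (0:ℝ) ≤ C * (Mb + 1))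
        calc C * ((Mb + 1) * δ) = (C * (Mb + 1)) * δ := by ring
          _ ≤ (C * (Mb + 1)) * (ε / (2 * C * (Mb + 1))) := this
          _ = ε / 2 := by field_simp
      calc ‖Φ t s0 x - Φ t t0 x‖ ≤ C * (Mb * |s0 - t0|) := h
        _ ≤ ε / 2 := le_trans h1 h2
        _ < ε := by linarith
    rw [Metric.mem_thickening_iff]
    exact ⟨Φ t t0 x, hmem, hdist⟩
  choose V K ε hVopen hpV hε hKc hεsub hmain using key
  obtain ⟨ts, hts⟩ := hS.elim_nhds_subcover' (fun p hp => V p hp)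
    (fun p hp => (hVopen p hp).mem_nhds (hpV p hp))
  refine ⟨⋃ p ∈ ts, Metric.thickening (ε p p.2) (K p p.2), ?_, ?_, ?_, ?_⟩
  · exact isOpen_biUnion fun p _ => Metric.isOpen_thickening
  · apply IsCompact.of_isClosed_subset
      (s := ⋃ p ∈ ts, Metric.cthickening (ε p p.2) (K p p.2))
    · exact ts.finite_toSet.isCompact_biUnion fun p _ => (hKc p p.2).cthickening
    · exact isClosed_closure
    · apply closure_minimal
      · exact Set.iUnion₂_mono fun p _ => Metric.thickening_subset_cthickening _ _
      · exact ts.finite_toSet.isClosed_biUnion fun p _ => Metric.isClosed_cthickening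
  · calc closure (⋃ p ∈ ts, Metric.thickening (ε p p.2) (K p p.2))
        ⊆ ⋃ p ∈ ts, Metric.cthickening (ε p p.2) (K p p.2) := by
          apply closure_minimal
          · exact Set.iUnion₂_mono fun p _ => Metric.thickening_subset_cthickening _ _
          · exact ts.finite_toSet.isClosed_biUnion fun p _ => Metric.isClosed_cthickening
      _ ⊆ 𝒪 := Set.iUnion₂_subset fun p _ => hεsub p p.2
  · intro x0 hx0 t0 ht0
    have hpS : ((x0, t0) : EuclideanSpace ℝ (Fin d) × ℝ) ∈ S := ⟨hx0, ht0⟩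
    obtain ⟨p, hpts, hpV'⟩ := Set.mem_iUnion₂.mp (hts hpS)
    obtain ⟨t, htIoo, hΦ⟩ := hmain p p.2 (x0, t0) hpV' hpS
    exact ⟨t, htIoo, fun x hx => Set.mem_biUnion hpts (hΦ x hx)⟩
end
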